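/- Let G be a finite simple graph, n ≥ 1 a natural number, and i ≥ 0. Then the number C^i_G(n) of n-colorings of G with exactly i improper edges satisfies C^i_G(n) = (−1)^i · Σ_{j ≥ 0} (n − 1)^j · χ^{i,j}(G), where χ^{i,j}(G) := Σ_{S ⊆ E(G)} (−1)^{|S|} · C(|S|, i) · C(c(S), j). That is, each impropriety polynomial of G is expressed in terms of the graded Euler characteristics of the dichromatic homology of G. -/

import Mathlib

/-- The number of connected components of the spanning subgraph `(V, S)`. -/
noncomputable def comps (V : Type) [Fintype V] (S : Finset (Sym2 V)) : ℕ :=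
  Nat.card (SimpleGraph.fromEdgeSet (↑S : Set (Sym2 V))).ConnectedComponent

/-- `m(σ)`: the number of edges of `G` whose two endpoints receive the same color
under the coloring `σ` (the improper edges of `σ`). -/
def improperEdges {V : Type} [Fintype V] [DecidableEq V] (G : SimpleGraph V)
    [DecidableRel G.Adj] {n : ℕ} (σ : V → Fin n) : ℕ :=
  (G.edgeFinset.filter fun e => (Sym2.map σ e).IsDiag).card

/-- `C^i_G(n)`: the number of `n`-colorings of `G` with exactly `i` improper edges. -/
def improprietyCount {V : Type} [Fintype V] [DecidableEq V] (G : SimpleGraph V)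
    [DecidableRel G.Adj] (n i : ℕ) : ℕ :=
  (Finset.univ.filter fun σ : V → Fin n => improperEdges G σ = i).card

/-! Expanding `C(c(S), j)` against `(n - 1)^j` by the binomial theorem turns the right-hand side
into `(-1)^i Σ_S (-1)^|S| C(|S|, i) n^c(S)`, and `n^c(S)` counts the colorings under which every
edge of `S` is monochromatic. Exchanging the sums, a coloring `σ` whose set of monochromatic edges
is `D` contributes `Σ_{S ⊆ D} (-1)^|S| C(|S|, i)`, which is `(-1)^i` if `|D| = i` and `0`
otherwise. -/

open Finset

theorem Int.alternating_sum_range_choose_mul_choose (m i : ℕ) :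
    ∑ k ∈ Finset.range (m + 1), (-1 : ℤ) ^ k * m.choose k * k.choose i =
      if m = i then (-1) ^ i else 0 := by
  rcases lt_or_ge m i with hmi | hmi
  · rw [if_neg hmi.ne]
    refine sum_eq_zero fun k hk => ?_
    rw [Nat.choose_eq_zero_of_lt (show k < i by grind), Nat.cast_zero, mul_zero]
  obtain ⟨d, rfl⟩ := Nat.exists_eq_add_of_le hmi
  have hlow : ∑ k ∈ Finset.range i, (-1 : ℤ) ^ k * (i + d).choose k * k.choose i = 0 :=
    sum_eq_zero fun k hk => by
      rw [Nat.choose_eq_zero_of_lt (Finset.mem_range.mp hk), Nat.cast_zero, mul_zero]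
  calc ∑ k ∈ Finset.range (i + d + 1), (-1 : ℤ) ^ k * (i + d).choose k * k.choose i
      = ∑ t ∈ Finset.range (d + 1),
          (-1 : ℤ) ^ (i + t) * (i + d).choose (i + t) * (i + t).choose i := by
        rw [add_assoc, sum_range_add, hlow, zero_add]
    _ = (-1) ^ i * (i + d).choose i *
          ∑ t ∈ Finset.range (d + 1), (-1 : ℤ) ^ t * d.choose t := by
        rw [mul_sum]
        refine sum_congr rfl fun t _ => ?_
        have h := Nat.choose_mul (n := i + d) (Nat.le_add_right i t)
        simp only [Nat.add_sub_cancel_left] at h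
        rw [mul_assoc, ← Nat.cast_mul, h, pow_add]
        push_cast
        ring
    _ = if i + d = i then (-1) ^ i else 0 := by
        rw [Int.alternating_sum_range_choose]
        rcases d with _ | d <;> simp

theorem Finset.sum_powerset_neg_one_pow_card_mul_choose {α : Type*} (M : Finset α) (i : ℕ) :
    ∑ S ∈ M.powerset, (-1 : ℤ) ^ #S * (#S).choose i = if #M = i then (-1) ^ i else 0 := by
  rw [sum_powerset_apply_card (fun k => (-1 : ℤ) ^ k * k.choose i),
    ← Int.alternating_sum_range_choose_mul_choose]
  simp only [nsmul_eq_mul, mul_assoc, mul_left_comm]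

theorem Finset.filter_powerset_forall {α : Type*} (E : Finset α) (p : α → Prop)
    [DecidablePred p] [DecidablePred fun S : Finset α => ∀ e ∈ S, p e] :
    {S ∈ E.powerset | ∀ e ∈ S, p e} = (E.filter p).powerset := by
  ext S
  simp only [mem_filter, mem_powerset, subset_iff]
  grind

theorem Finset.sum_range_pow_mul_choose_of_le {R : Type*} [CommSemiring R] (x : R) {c N : ℕ}
    (hcN : c ≤ N) : ∑ j ∈ range (N + 1), x ^ j * c.choose j = (x + 1) ^ c := by
  rw [add_pow, ← sum_subset (range_subset_range.mpr (Nat.succ_le_succ hcN))]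
  · simp only [one_pow, mul_one]
  · intro j _ hj
    rw [Nat.choose_eq_zero_of_lt (by grind), Nat.cast_zero, mul_zero]

namespace SimpleGraph

variable {V α : Type*}

theorem Reachable.eq_of_forall_adj {H : SimpleGraph V} {f : V → α}
    (hf : ∀ ⦃u v⦄, H.Adj u v → f u = f v) {u v : V} (huv : H.Reachable u v) : f u = f v := by
  obtain ⟨p⟩ := huv
  induction p with
  | nil => rfl
  | cons h _ ih => exact (hf h).trans ih

def ConnectedComponent.liftEquiv (H : SimpleGraph V) :
    {f : V → α // ∀ ⦃u v⦄, H.Adj u v → f u = f v} ≃ (H.ConnectedComponent → α) where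
  toFun f := ConnectedComponent.lift f.1 fun _ _ p _ => p.reachable.eq_of_forall_adj f.2
  invFun g := ⟨fun v => g (H.connectedComponentMk v), fun _ _ h =>
    congrArg g (ConnectedComponent.connectedComponentMk_eq_of_adj h)⟩
  right_inv g := funext fun c => c.ind fun _ => rfl

theorem card_fun_eq_on_adj [Finite V] (H : SimpleGraph V) (α : Type*) :
    Nat.card {f : V → α // ∀ ⦃u v⦄, H.Adj u v → f u = f v} =
      Nat.card α ^ Nat.card H.ConnectedComponent := by
  rw [Nat.card_congr (ConnectedComponent.liftEquiv H), Nat.card_fun]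

theorem forall_isDiag_map_iff_fromEdgeSet_adj (s : Set (Sym2 V)) (f : V → α) :
    (∀ e ∈ s, (Sym2.map f e).IsDiag) ↔ ∀ ⦃u v⦄, (fromEdgeSet s).Adj u v → f u = f v := by
  refine ⟨fun h u v huv => ?_, fun h e he => ?_⟩
  · simpa using h _ ((fromEdgeSet_adj s).mp huv).1
  · induction e using Sym2.ind with | _ u v => ?_
    rcases eq_or_ne u v with rfl | huv
    · simp
    · simpa using h ((fromEdgeSet_adj s).mpr ⟨he, huv⟩)

end SimpleGraph

lemma comps_le_card (V : Type) [Fintype V] (S : Finset (Sym2 V)) :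
    comps V S ≤ Fintype.card V := by
  rw [comps, ← Nat.card_eq_fintype_card]
  exact Nat.card_le_card_of_surjective _ fun c => c.exists_rep

lemma card_filter_forall_isDiag_map_eq_pow_comps (V : Type) [Fintype V] [DecidableEq V] (n : ℕ)
    (S : Finset (Sym2 V)) :
    #{σ : V → Fin n | ∀ e ∈ S, (Sym2.map σ e).IsDiag} = n ^ comps V S := by
  calc #{σ : V → Fin n | ∀ e ∈ S, (Sym2.map σ e).IsDiag}
      = Nat.card {σ : V → Fin n //
          ∀ ⦃u v⦄, (SimpleGraph.fromEdgeSet (S : Set (Sym2 V))).Adj u v → σ u = σ v} := by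
        rw [← Fintype.card_subtype, ← Nat.card_eq_fintype_card]
        exact Nat.card_congr (Equiv.subtypeEquivRight fun σ =>
          SimpleGraph.forall_isDiag_map_iff_fromEdgeSet_adj _ σ)
    _ = n ^ comps V S := by rw [SimpleGraph.card_fun_eq_on_adj, Nat.card_fin, comps]

theorem impropriety_eq_graded_euler_char_general (V : Type) [Fintype V] [DecidableEq V]
    (G : SimpleGraph V) [DecidableRel G.Adj] (n : ℕ) (i : ℕ) :
    (improprietyCount G n i : ℤ) =
      (-1) ^ i *
        ∑ j ∈ Finset.range (Fintype.card V + 1),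
          ((n : ℤ) - 1) ^ j *
            ∑ S ∈ G.edgeFinset.powerset,
              (-1) ^ S.card * (S.card.choose i : ℤ) * ((comps V S).choose j : ℤ) := by
  have hcomps (S : Finset (Sym2 V)) : ∑ j ∈ range (Fintype.card V + 1),
      ((n : ℤ) - 1) ^ j * ((comps V S).choose j : ℤ) = (n : ℤ) ^ comps V S := by
    rw [sum_range_pow_mul_choose_of_le _ (comps_le_card V S), sub_add_cancel]
  have hmonochromatic (σ : V → Fin n) :
      ∑ S ∈ G.edgeFinset.powerset with ∀ e ∈ S, (Sym2.map σ e).IsDiag,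
        (-1 : ℤ) ^ #S * (#S).choose i = if improperEdges G σ = i then (-1) ^ i else 0 := by
    rw [filter_powerset_forall, sum_powerset_neg_one_pow_card_mul_choose]
    rfl
  symm
  calc (-1) ^ i * ∑ j ∈ range (Fintype.card V + 1), ((n : ℤ) - 1) ^ j *
          ∑ S ∈ G.edgeFinset.powerset, (-1) ^ #S * ((#S).choose i : ℤ) * (comps V S).choose j
      = (-1) ^ i * ∑ S ∈ G.edgeFinset.powerset, (-1) ^ #S * ((#S).choose i : ℤ) *
          #{σ : V → Fin n | ∀ e ∈ S, (Sym2.map σ e).IsDiag} := by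
        simp_rw [card_filter_forall_isDiag_map_eq_pow_comps, Nat.cast_pow, ← hcomps, mul_sum]
        rw [sum_comm]
        exact sum_congr rfl fun S _ => sum_congr rfl fun j _ => by ring
    _ = (-1) ^ i * ∑ σ : V → Fin n, if improperEdges G σ = i then (-1) ^ i else 0 := by
        congr 1
        simp_rw [card_filter, Nat.cast_sum, Nat.cast_ite, Nat.cast_one, Nat.cast_zero, mul_sum,
          mul_ite, mul_one, mul_zero]
        rw [sum_comm]
        exact sum_congr rfl fun σ _ => by rw [← hmonochromatic, sum_filter]
    _ = improprietyCount G n i := by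
        rw [improprietyCount, ← sum_filter, sum_const, nsmul_eq_mul, mul_left_comm, ← pow_add,
          Even.neg_one_pow ⟨i, rfl⟩, mul_one]

/-- The impropriety polynomials are graded Euler characteristics of the
dichromatic homology:
`C^i_G(n) = (−1)^i Σ_{j ≥ 0} (n − 1)^j χ^{i,j}(G)`,
where `χ^{i,j}(G) = Σ_{S ⊆ E(G)} (−1)^{|S|} C(|S|, i) C(c(S), j)`.
(All terms with `j > |V|` vanish, so that range suffices.) -/
theorem impropriety_eq_graded_euler_char (V : Type) [Fintype V] [DecidableEq V]
    (G : SimpleGraph V) [DecidableRel G.Adj] (n : ℕ) (hn : 1 ≤ n) (i : ℕ) :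
    (improprietyCount G n i : ℤ) =
      (-1) ^ i *
        ∑ j ∈ Finset.range (Fintype.card V + 1),
          ((n : ℤ) - 1) ^ j *
            ∑ S ∈ G.edgeFinset.powerset,
              (-1) ^ S.card * (S.card.choose i : ℤ) * ((comps V S).choose j : ℤ) :=
  impropriety_eq_graded_euler_char_general V G n i
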